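/- Let g_ℂ^{1,0} be the complex Heisenberg Lie algebra with basis X₁, X₂, X₃ and brackets [X₁,X₂] = [X₂,X₃] = 0, [X₁,X₃] = X₂, and let π = c₁ X₁∧X₂ + c₂ X₁∧X₃ + c₃ X₂∧X₃ be a left-invariant bivector field on the Iwasawa manifold 𝕀₃ (c₁, c₂, c₃ ∈ ℂ). Then [π, π]_S = 0 if and only if c₂ = 0; and for such π the induced Koszul–Brylinski operator ∂_π vanishes on left-invariant forms, the Dolbeault–Koszul–Brylinski spectral sequence of (𝕀₃, π) degenerates at the E₁-page, and H_k(𝕀₃, π) has dimensions 1, 5, 11, 14, 11, 5, 1 for k = 0, 1, 2, 3, 4, 5, 6 respectively. -/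

import Mathlib

/-!
# Holomorphic Poisson structures and Koszul–Brylinski homology of the Iwasawa manifold

Statement 17 of Chen–Chen–Yang–Yang, *Holomorphic Koszul–Brylinski homologies of
Poisson blow-ups* (Section 6.2).

The Iwasawa manifold `𝕀₃ = ℂ³/G₃` is complex parallelisable, and both its Dolbeault
cohomology and (by Lemma 6.2 of the paper) the holomorphic Koszul–Brylinski homology
of any left-invariant holomorphic Poisson structure are computed by the
finite-dimensional double complex `(∧^{•,•} g_ℂ^*, ∂_π, ∂̄)` of left-invariant forms.
We realise this double complex completely concretely: left-invariant forms are
coefficient functions on the monomial basis `w^I ∧ w̄^J` (`I, J ⊆ {1,2,3}`), the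
operators `∂`, `∂̄` are determined by the structure equations
`dw¹ = dw³ = 0`, `dw² = −w¹∧w³` of the complex Heisenberg Lie algebra, the interior
product `ι_π` and the Koszul–Brylinski operator `∂_π = ι_π∂ − ∂ι_π` are built from
them, and the Schouten bracket of left-invariant bivector fields is given by its
formula on decomposables in terms of the Lie bracket.
-/

noncomputable section

open Module

namespace InvForms

variable (m : ℕ)

/-- Indexing of the monomial basis `w^I ∧ w̄^J` of left-invariant forms. -/
abbrev Idx := Finset (Fin m) × Finset (Fin m)

/-- Left-invariant complex forms on the nilmanifold, as coefficient functions on the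
monomial basis `w^I ∧ w̄^J`. -/
abbrev Forms := Idx m → ℂ

/-- `(-1)^{#{a ∈ s | a < k}}`, the Koszul sign of inserting `w^k` in front of `w^s`. -/
def insSign (k : Fin m) (s : Finset (Fin m)) : ℂ := (-1) ^ (s.filter fun a => a < k).card

/-- Contraction with the frame vector field `X_k` (interior product on the
holomorphic part). -/
def iotaX (k : Fin m) : Forms m →ₗ[ℂ] Forms m :=
  (Matrix.of fun st st' : Idx m =>
    if st'.1 = insert k st.1 ∧ k ∉ st.1 ∧ st'.2 = st.2 then insSign m k st.1 else 0).mulVecLin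

/-- The sign of rewriting `w^S ∧ w^T` as `±w^U`; zero unless `S` and `T` are
disjoint with union `U`. -/
def wedgeCoef (S T U : Finset (Fin m)) : ℂ :=
  if Disjoint S T ∧ S ∪ T = U then
    (-1) ^ ((S ×ˢ T).filter fun ab => ab.2 < ab.1).card
  else 0

/-- The left-invariant holomorphic Dolbeault operator `∂` determined by the structure
coefficients `dc` (so that `∂ w^j = ∑_S dc j S • w^S`): on a complex parallelisable
nilmanifold, `∂` acts on the monomial `w^I ∧ w̄^J` through the holomorphic factor as a
derivation. -/
def delOp (dc : Fin m → Finset (Fin m) → ℂ) : Forms m →ₗ[ℂ] Forms m :=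
  (Matrix.of fun st' st : Idx m =>
    if st'.2 = st.2 then
      ∑ j ∈ st.1, insSign m j (st.1.erase j) *
        ∑ S : Finset (Fin m), dc j S * wedgeCoef m S (st.1.erase j) st'.1
    else 0).mulVecLin

/-- The left-invariant antiholomorphic Dolbeault operator `∂̄` determined by the
structure coefficients `dc` (so that `∂̄ w̄^j = ∑_S dc j S • w̄^S`), acting on
`w^I ∧ w̄^J` through the antiholomorphic factor with the Koszul sign `(-1)^{|I|}`. -/
def dbarOp (dc : Fin m → Finset (Fin m) → ℂ) : Forms m →ₗ[ℂ] Forms m :=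
  (Matrix.of fun st' st : Idx m =>
    if st'.1 = st.1 then
      (-1 : ℂ) ^ st.1.card *
        ∑ j ∈ st.2, insSign m j (st.2.erase j) *
          ∑ S : Finset (Fin m), dc j S * wedgeCoef m S (st.2.erase j) st'.2
    else 0).mulVecLin

/-- Contraction `ι_π` with the left-invariant bivector field
`π = ½ ∑_{a,b} B^{ab} X_a ∧ X_b` (`B` antisymmetric). -/
def iotaBiv (B : Fin m → Fin m → ℂ) : Forms m →ₗ[ℂ] Forms m :=
  (2⁻¹ : ℂ) • ∑ a : Fin m, ∑ b : Fin m, B a b • (iotaX m a ∘ₗ iotaX m b)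

/-- The Koszul–Brylinski operator `∂_π = ι_π ∘ ∂ − ∂ ∘ ι_π` on left-invariant
forms. -/
def kbOp (dc : Fin m → Finset (Fin m) → ℂ) (B : Fin m → Fin m → ℂ) :
    Forms m →ₗ[ℂ] Forms m :=
  iotaBiv m B ∘ₗ delOp m dc - delOp m dc ∘ₗ iotaBiv m B

/-- The subspace of left-invariant forms of pure bidegree `(p, q)`. -/
def grade (p q : ℤ) : Submodule ℂ (Forms m) where
  carrier := {f | ∀ st : Idx m, f st ≠ 0 → (st.1.card : ℤ) = p ∧ (st.2.card : ℤ) = q}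
  add_mem' := by
    intro f g hf hg st hst
    by_cases h1 : f st = 0
    · refine hg st ?_
      intro h2
      apply hst
      show f st + g st = 0
      rw [h1, h2, add_zero]
    · exact hf st h1
  zero_mem' := by intro st hst; exact absurd rfl hst
  smul_mem' := by
    intro cc f hf st hst
    refine hf st ?_
    intro h0
    apply hst
    show cc * f st = 0
    rw [h0, mul_zero]

/-- The subspace of left-invariant forms of pure total Koszul–Brylinski degree
`k = m − p + q`. -/
def totalGrade (k : ℤ) : Submodule ℂ (Forms m) where
  carrier := {f | ∀ st : Idx m, f st ≠ 0 → (m : ℤ) - st.1.card + st.2.card = k}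
  add_mem' := by
    intro f g hf hg st hst
    by_cases h1 : f st = 0
    · refine hg st ?_
      intro h2
      apply hst
      show f st + g st = 0
      rw [h1, h2, add_zero]
    · exact hf st h1
  zero_mem' := by intro st hst; exact absurd rfl hst
  smul_mem' := by
    intro cc f hf st hst
    refine hf st ?_
    intro h0
    apply hst
    show cc * f st = 0
    rw [h0, mul_zero]

/-- The dimension of the degree-`k` cohomology of the total complex of the double
complex of left-invariant forms with total differential `D` (for the
Koszul–Brylinski total grading `k = m − p + q`).  For `D = ∂_π + ∂̄` this computes
`dim_ℂ H_k(M, π)` for a complex parallelisable nilmanifold `M`. -/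
def totCohDim (D : Forms m →ₗ[ℂ] Forms m) (k : ℤ) : ℕ :=
  finrank ℂ (↥(totalGrade m k ⊓ LinearMap.ker D) ⧸
    Submodule.comap (totalGrade m k ⊓ LinearMap.ker D).subtype
      (Submodule.map D (totalGrade m (k - 1))))

/-- The invariant Hodge number `h^{p,q}`: the dimension of the `∂̄`-cohomology of
left-invariant forms in bidegree `(p, q)` (by Sakane's theorem this equals the
Dolbeault Hodge number of a complex parallelisable nilmanifold). -/
def hodgeDim (dc : Fin m → Finset (Fin m) → ℂ) (p q : ℤ) : ℕ :=
  finrank ℂ (↥(grade m p q ⊓ LinearMap.ker (dbarOp m dc)) ⧸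
    Submodule.comap (grade m p q ⊓ LinearMap.ker (dbarOp m dc)).subtype
      (Submodule.map (dbarOp m dc) (grade m p (q - 1))))

/-- The `E₁`-degeneracy of the Dolbeault–Koszul–Brylinski spectral sequence of the
nilmanifold with invariant Poisson bivector `B`, expressed by the numerical criterion
`dim_ℂ H_k = ∑_{p-q=m-k} h^{p,q}` for all `0 ≤ k ≤ 2m`. -/
def e1Degenerates (dc : Fin m → Finset (Fin m) → ℂ) (B : Fin m → Fin m → ℂ) : Prop :=
  ∀ k : ℤ, 0 ≤ k → k ≤ 2 * (m : ℤ) →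
    totCohDim m (kbOp m dc B + dbarOp m dc) k =
      ∑ q ∈ Finset.range (m + 1), hodgeDim m dc ((m : ℤ) - k + q) (q : ℤ)

/-- Kronecker delta. -/
def delta (i j : Fin m) : ℂ := if i = j then 1 else 0

/-- The trivector `v ∧ X_b ∧ X_d` evaluated at `(x, y, z)` (as an alternating
3-tensor), where `v = ∑ v^i X_i`. -/
def tri (v : Fin m → ℂ) (b d : Fin m) (x y z : Fin m) : ℂ :=
  Matrix.det !![v x, v y, v z;
                delta m b x, delta m b y, delta m b z;
                delta m d x, delta m d y, delta m d z]

/-- The Schouten bracket `[P, Q]_S` of two left-invariant bivector fields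
`P = ½∑ P^{ab} X_a ∧ X_b`, `Q = ½∑ Q^{cd} X_c ∧ X_d`, evaluated as an alternating
trivector at `(x, y, z)`; here `br a c` gives the coordinates of the Lie bracket
`[X_a, X_c]`, and on decomposables
`[A∧B, C∧D]_S = [A,C]∧B∧D − [A,D]∧B∧C − [B,C]∧A∧D + [B,D]∧A∧C`. -/
def schouten (br : Fin m → Fin m → Fin m → ℂ) (B C : Fin m → Fin m → ℂ)
    (x y z : Fin m) : ℂ :=
  (4⁻¹ : ℂ) * ∑ a : Fin m, ∑ b : Fin m, ∑ c : Fin m, ∑ d : Fin m,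
    B a b * C c d *
      (tri m (br a c) b d x y z - tri m (br a d) b c x y z -
        tri m (br b c) a d x y z + tri m (br b d) a c x y z)

/-- Coordinates of the Lie bracket of the complex Heisenberg Lie algebra
(`heisBracket a c` = the coordinates of `[X_a, X_c]`):
`[X₁,X₂] = [X₂,X₃] = 0`, `[X₁,X₃] = X₂`  (indices are zero-based). -/
def heisBracket : Fin 3 → Fin 3 → Fin 3 → ℂ := fun a c i =>
  if a = 0 ∧ c = 2 ∧ i = 1 then 1
  else if a = 2 ∧ c = 0 ∧ i = 1 then -1
  else 0

/-- Structure coefficients of the (anti)holomorphic differentials on the Iwasawa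
manifold: `dw¹ = dw³ = 0`, `dw² = −w¹∧w³` (zero-based: `∂w^1 = −w^0 ∧ w^2`). -/
def iwasawaDC : Fin 3 → Finset (Fin 3) → ℂ := fun j S =>
  if j = 1 ∧ S = ({0, 2} : Finset (Fin 3)) then -1 else 0

/-- The left-invariant bivector field `π = c₁X₁∧X₂ + c₂X₁∧X₃ + c₃X₂∧X₃` on the
Iwasawa manifold, as an antisymmetric coefficient matrix (`π = ½∑ B^{ab} X_a∧X_b`). -/
def heisBiv (c₁ c₂ c₃ : ℂ) (i j : Fin 3) : ℂ :=
  !![0, c₁, c₂; -c₁, 0, c₃; -c₂, -c₃, 0] i j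

/-!
Since `X₂` is central and `[X₁, X₃] = X₂`, only `X₁ ∧ X₃` contributes to the Schouten bracket,
and `[π, π]_S = −2c₂² X₁ ∧ X₂ ∧ X₃`.

The only nonzero structure equation is `dw² = −w¹ ∧ w³` (indices are zero-based in the code,
so `w²` has index `1`), so `∂` sends `w² ∧ w̄^J` to
`−w¹ ∧ w³ ∧ w̄^J` and kills every other monomial. When `c₂ = 0`, every term of `π` contains
`X₂`: then `ι_π` kills the image of `∂` (which has no `w²`) and its own image has no `w²`, so
`∂_π = ι_π∂ − ∂ι_π = 0`. The homology is therefore the `∂̄`-cohomology regraded by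
`k = 3 − p + q`. By the conjugate structure equation, `∂̄` maps the monomials `w^I ∧ w̄²`
bijectively (up to sign) onto the `w^I ∧ w̄¹ ∧ w̄³` and kills the others, so every cohomology
dimension, total or of pure bidegree, counts monomials, and both sides of the `E₁` criterion
can be evaluated.
-/

section VanishingOff

variable {K ι : Type*} [Field K]

def vanishingOff (s : Finset ι) : Submodule K (ι → K) where
  carrier := {f | ∀ i ∉ s, f i = 0}
  add_mem' hf hg i hi := by simp [hf i hi, hg i hi]
  zero_mem' _ _ := rfl
  smul_mem' c _ hf i hi := by simp [hf i hi]

lemma mem_vanishingOff {s : Finset ι} {f : ι → K} : f ∈ vanishingOff s ↔ ∀ i ∉ s, f i = 0 :=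
  Iff.rfl

lemma vanishingOff_inf_vanishingOff [DecidableEq ι] (s t : Finset ι) :
    vanishingOff s ⊓ vanishingOff t = vanishingOff (K := K) (s ∩ t) := by
  ext f
  simp only [Submodule.mem_inf, mem_vanishingOff, Finset.mem_inter, not_and_or]
  exact ⟨fun ⟨hs, ht⟩ i hi => hi.elim (hs i) (ht i), fun h => ⟨fun i hi => h i (.inl hi),
    fun i hi => h i (.inr hi)⟩⟩

lemma vanishingOff_mono {s t : Finset ι} (h : s ⊆ t) :
    vanishingOff (K := K) s ≤ vanishingOff t :=
  fun _ hf i hi => hf i fun his => hi (h his)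

lemma finrank_vanishingOff (s : Finset ι) : finrank K (vanishingOff (K := K) s) = s.card := by
  classical
  let e : vanishingOff (K := K) s ≃ₗ[K] (s → K) :=
    { toFun := fun f i => f.1 i
      map_add' := fun _ _ => rfl
      map_smul' := fun _ _ => rfl
      invFun := fun g => ⟨fun i => if h : i ∈ s then g ⟨i, h⟩ else 0, fun i hi => dif_neg hi⟩
      left_inv := fun f => Subtype.ext <| funext fun i => by
        by_cases h : i ∈ s
        · exact dif_pos h
        · exact (dif_neg h).trans (f.2 i h).symm
      right_inv := fun g => funext fun i => dif_pos i.2 }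
  rw [e.finrank_eq, Module.finrank_fintype_fun_eq_card, Fintype.card_coe]

lemma finrank_quotient_vanishingOff [Fintype ι] {s t : Finset ι} (h : t ⊆ s) :
    finrank K (vanishingOff s ⧸ (vanishingOff (K := K) t).comap (vanishingOff s).subtype) =
      s.card - t.card := by
  have hsum := Submodule.finrank_quotient_add_finrank
    ((vanishingOff (K := K) t).comap (vanishingOff s).subtype)
  rw [(Submodule.comapSubtypeEquivOfLe (vanishingOff_mono h)).finrank_eq, finrank_vanishingOff,
    finrank_vanishingOff] at hsum
  omega

end VanishingOff

section Operators

variable {m : ℕ}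

/-- The coefficient of `w^{I'}` in `∂ w^I`. -/
def delCoeff (dc : Fin m → Finset (Fin m) → ℂ) (I I' : Finset (Fin m)) : ℂ :=
  ∑ j ∈ I, insSign m j (I.erase j) * ∑ S : Finset (Fin m), dc j S * wedgeCoef m S (I.erase j) I'

lemma delOp_apply (dc : Fin m → Finset (Fin m) → ℂ) (f : Forms m) (I' J : Finset (Fin m)) :
    delOp m dc f (I', J) = ∑ I, delCoeff dc I I' * f (I, J) := by
  simp only [delOp, delCoeff, Matrix.mulVecLin_apply, Matrix.mulVec, dotProduct, Matrix.of_apply,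
    Fintype.sum_prod_type, ite_mul, zero_mul, Finset.sum_ite_eq, Finset.mem_univ, if_true]

lemma dbarOp_apply (dc : Fin m → Finset (Fin m) → ℂ) (f : Forms m) (I J' : Finset (Fin m)) :
    dbarOp m dc f (I, J') = (-1) ^ I.card * ∑ J, delCoeff dc J J' * f (I, J) := by
  simp only [dbarOp, Matrix.mulVecLin_apply, Matrix.mulVec, dotProduct, Matrix.of_apply,
    Fintype.sum_prod_type, ite_mul, zero_mul, Finset.sum_ite_irrel, Finset.sum_const_zero,
    Finset.sum_ite_eq, Finset.mem_univ, if_true, delCoeff]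
  rw [Finset.mul_sum]
  simp only [mul_assoc]

lemma iotaX_apply (k : Fin m) (f : Forms m) (I J : Finset (Fin m)) :
    iotaX m k f (I, J) = if k ∈ I then 0 else insSign m k I * f (insert k I, J) := by
  rw [iotaX, Matrix.mulVecLin_apply, Matrix.mulVec, dotProduct,
    Finset.sum_eq_single (insert k I, J)]
  · by_cases hk : k ∈ I <;> simp [hk]
  · rintro ⟨I', J'⟩ - hne
    rw [Matrix.of_apply, if_neg, zero_mul]
    rintro ⟨hI, -, hJ⟩
    exact hne (Prod.ext hI hJ)
  · simp

lemma iotaBiv_apply (B : Fin m → Fin m → ℂ) (f : Forms m) (st : Idx m) :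
    iotaBiv m B f st = 2⁻¹ * ∑ a, ∑ b, B a b * iotaX m a (iotaX m b f) st := by
  simp [iotaBiv, Finset.sum_apply]

end Operators

section Grading

variable (m : ℕ)

def bidegreeIdx (p q : ℤ) : Finset (Idx m) :=
  Finset.univ.filter fun st => (st.1.card : ℤ) = p ∧ (st.2.card : ℤ) = q

def totalDegreeIdx (k : ℤ) : Finset (Idx m) :=
  Finset.univ.filter fun st => (m : ℤ) - st.1.card + st.2.card = k

lemma grade_eq_vanishingOff (p q : ℤ) : grade m p q = vanishingOff (bidegreeIdx m p q) := by
  ext f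
  simp only [bidegreeIdx, mem_vanishingOff, Finset.mem_filter, Finset.mem_univ, true_and]
  exact forall_congr' fun _ => not_imp_comm

lemma totalGrade_eq_vanishingOff (k : ℤ) : totalGrade m k = vanishingOff (totalDegreeIdx m k) := by
  ext f
  simp only [totalDegreeIdx, mem_vanishingOff, Finset.mem_filter, Finset.mem_univ, true_and]
  exact forall_congr' fun _ => not_imp_comm

end Grading

lemma schouten_heisBiv_self (c₁ c₂ c₃ : ℂ) (x y z : Fin 3) :
    schouten 3 heisBracket (heisBiv c₁ c₂ c₃) (heisBiv c₁ c₂ c₃) x y z =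
      -2 * c₂ ^ 2 * tri 3 (delta 3 0) 1 2 x y z := by
  fin_cases x <;> fin_cases y <;> fin_cases z <;>
    simp [schouten, heisBracket, heisBiv, tri, delta, Fin.sum_univ_three, Matrix.det_fin_three] <;>
    ring

lemma tri_delta_zero_one_two : tri 3 (delta 3 0) 1 2 0 1 2 = 1 := by
  simp [tri, delta, Matrix.det_fin_three]

lemma sum_iwasawaDC_mul_wedgeCoef (j : Fin 3) (T U : Finset (Fin 3)) :
    ∑ S, iwasawaDC j S * wedgeCoef 3 S T U = if j = 1 then -wedgeCoef 3 {0, 2} T U else 0 := by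
  by_cases hj : j = 1 <;> simp [iwasawaDC, hj]

lemma not_disjoint_erase_one {I : Finset (Fin 3)} (h1 : 1 ∈ I) (hI : I ≠ {1}) :
    ¬ Disjoint ({0, 2} : Finset (Fin 3)) (I.erase 1) := by
  obtain ⟨y, hy, hy1⟩ : ∃ y ∈ I, y ≠ 1 := by
    by_contra! h
    exact hI (Finset.eq_singleton_iff_unique_mem.2 ⟨h1, h⟩)
  rw [Finset.not_disjoint_iff]
  refine ⟨y, ?_, Finset.mem_erase.2 ⟨hy1, hy⟩⟩
  fin_cases y <;> simp_all

lemma delCoeff_iwasawaDC (I I' : Finset (Fin 3)) :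
    delCoeff iwasawaDC I I' = if I = {1} ∧ I' = {0, 2} then -1 else 0 := by
  simp only [delCoeff, sum_iwasawaDC_mul_wedgeCoef, mul_ite, mul_zero, Finset.sum_ite_eq']
  by_cases hI : I = {1}
  · subst hI
    split_ifs <;> simp_all [insSign, wedgeCoef, eq_comm]
  · rw [if_neg (show ¬(I = {1} ∧ I' = {0, 2}) from fun h => hI h.1)]
    split_ifs with h1
    · simp [wedgeCoef, not_disjoint_erase_one h1 hI]
    · rfl

lemma delOp_iwasawaDC_apply (f : Forms 3) (I J : Finset (Fin 3)) :
    delOp 3 iwasawaDC f (I, J) = if I = {0, 2} then -f ({1}, J) else 0 := by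
  simp only [delOp_apply, delCoeff_iwasawaDC, ite_and, ite_mul, neg_one_mul, zero_mul,
    Finset.sum_ite_eq', Finset.mem_univ, if_true]

lemma dbarOp_iwasawaDC_apply (f : Forms 3) (I J : Finset (Fin 3)) :
    dbarOp 3 iwasawaDC f (I, J) = if J = {0, 2} then -((-1) ^ I.card * f (I, {1})) else 0 := by
  simp only [dbarOp_apply, delCoeff_iwasawaDC, ite_and, ite_mul, neg_one_mul, zero_mul,
    Finset.sum_ite_eq', Finset.mem_univ, if_true]
  split_ifs <;> ring

lemma iotaBiv_heisBiv_apply_of_one_mem (c₁ c₃ : ℂ) (f : Forms 3) {I : Finset (Fin 3)}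
    (J : Finset (Fin 3)) (hI : 1 ∈ I) : iotaBiv 3 (heisBiv c₁ 0 c₃) f (I, J) = 0 := by
  simp [iotaBiv_apply, Fin.sum_univ_three, heisBiv, iotaX_apply, hI]

lemma iotaBiv_heisBiv_eq_zero (c₁ c₃ : ℂ) {f : Forms 3} (hf : ∀ I J, 1 ∈ I → f (I, J) = 0) :
    iotaBiv 3 (heisBiv c₁ 0 c₃) f = 0 := by
  ext ⟨I, J⟩
  simp [iotaBiv_apply, Fin.sum_univ_three, heisBiv, iotaX_apply, hf]

lemma kbOp_heisBiv_eq_zero (c₁ c₃ : ℂ) : kbOp 3 iwasawaDC (heisBiv c₁ 0 c₃) = 0 := by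
  refine LinearMap.ext fun f => funext fun ⟨I, J⟩ => ?_
  have hdel : ∀ I J, 1 ∈ I → delOp 3 iwasawaDC f (I, J) = 0 := by
    intro I J h1
    rw [delOp_iwasawaDC_apply, if_neg]
    rintro rfl
    simp at h1
  simp [kbOp, iotaBiv_heisBiv_eq_zero c₁ c₃ hdel, delOp_iwasawaDC_apply,
    iotaBiv_heisBiv_apply_of_one_mem]

lemma ker_dbarOp_iwasawaDC :
    LinearMap.ker (dbarOp 3 iwasawaDC) =
      vanishingOff (Finset.univ.filter fun st => st.2 ≠ {1}) := by
  ext f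
  simp only [LinearMap.mem_ker, mem_vanishingOff, Finset.mem_filter, Finset.mem_univ, true_and,
    not_not]
  constructor
  · rintro hf ⟨I, J⟩ rfl
    have h := congr_fun hf (I, {0, 2})
    rw [dbarOp_iwasawaDC_apply, if_pos rfl] at h
    simpa using h
  · intro hf
    funext ⟨I, J⟩
    simp [dbarOp_iwasawaDC_apply, hf (I, {1}) rfl]

lemma map_dbarOp_iwasawaDC (t : Finset (Idx 3)) :
    (vanishingOff t).map (dbarOp 3 iwasawaDC) =
      vanishingOff (Finset.univ.filter fun st => st.2 = {0, 2} ∧ (st.1, {1}) ∈ t) := by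
  apply le_antisymm
  · rintro _ ⟨f, hf, rfl⟩ ⟨I, J⟩ hIJ
    rw [dbarOp_iwasawaDC_apply]
    by_cases hJ : J = {0, 2}
    · subst hJ
      rw [if_pos rfl, hf (I, {1}) fun h => hIJ (by simp [h]), mul_zero, neg_zero]
    · rw [if_neg hJ]
  · intro g hg
    refine ⟨fun st => if st.2 = {1} then -(-1) ^ st.1.card * g (st.1, {0, 2}) else 0, ?_, ?_⟩
    · rintro ⟨I, J⟩ hIJ
      dsimp only
      split_ifs with hJ
      · rw [hg (I, {0, 2}) (by simp [← hJ, hIJ]), mul_zero]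
      · rfl
    · funext ⟨I, J⟩
      rw [dbarOp_iwasawaDC_apply]
      by_cases hJ : J = {0, 2}
      · subst hJ
        dsimp only
        rw [if_pos rfl, if_pos rfl, neg_mul, mul_neg, neg_neg, ← mul_assoc, ← mul_pow]
        simp
      · rw [if_neg hJ]
        exact (hg (I, J) (by simp [hJ])).symm

lemma finrank_dbarOp_iwasawaDC_cohomology (s t : Finset (Idx 3))
    (hst : ∀ I, (I, {1}) ∈ t → (I, {0, 2}) ∈ s) :
    finrank ℂ (↥(vanishingOff s ⊓ LinearMap.ker (dbarOp 3 iwasawaDC)) ⧸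
      ((vanishingOff t).map (dbarOp 3 iwasawaDC)).comap
        (vanishingOff s ⊓ LinearMap.ker (dbarOp 3 iwasawaDC)).subtype) =
      (s.filter fun st => st.2 ≠ {1}).card - (t.filter fun st => st.2 = {1}).card := by
  have hcard : (Finset.univ.filter fun st : Idx 3 => st.2 = {0, 2} ∧ (st.1, {1}) ∈ t).card =
      (t.filter fun st => st.2 = {1}).card := by
    refine Finset.card_nbij' (fun st => (st.1, {1})) (fun st => (st.1, {0, 2})) ?_ ?_ ?_ ?_ <;>
      rintro ⟨I, J⟩ <;> aesop
  rw [ker_dbarOp_iwasawaDC, vanishingOff_inf_vanishingOff, Finset.inter_filter,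
    Finset.inter_univ, map_dbarOp_iwasawaDC, finrank_quotient_vanishingOff, hcard]
  rintro ⟨I, J⟩
  simp only [Finset.mem_filter, Finset.mem_univ, true_and]
  rintro ⟨rfl, ht⟩
  exact ⟨hst I ht, by decide⟩

lemma hodgeDim_iwasawaDC (p q : ℤ) :
    hodgeDim 3 iwasawaDC p q = ((bidegreeIdx 3 p q).filter fun st => st.2 ≠ {1}).card -
      ((bidegreeIdx 3 p (q - 1)).filter fun st => st.2 = {1}).card := by
  rw [hodgeDim, grade_eq_vanishingOff, grade_eq_vanishingOff, finrank_dbarOp_iwasawaDC_cohomology]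
  intro I
  simp only [bidegreeIdx, Finset.mem_filter, Finset.mem_univ, true_and, Finset.card_singleton,
    Finset.card_pair (by decide : (0 : Fin 3) ≠ 2)]
  omega

lemma totCohDim_dbarOp_iwasawaDC (k : ℤ) :
    totCohDim 3 (dbarOp 3 iwasawaDC) k = ((totalDegreeIdx 3 k).filter fun st => st.2 ≠ {1}).card -
      ((totalDegreeIdx 3 (k - 1)).filter fun st => st.2 = {1}).card := by
  rw [totCohDim, totalGrade_eq_vanishingOff, totalGrade_eq_vanishingOff,
    finrank_dbarOp_iwasawaDC_cohomology]
  intro I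
  simp only [totalDegreeIdx, Finset.mem_filter, Finset.mem_univ, true_and, Finset.card_singleton,
    Finset.card_pair (by decide : (0 : Fin 3) ≠ 2)]
  omega

lemma totCohDim_dbarOp_iwasawaDC_eq (k : Fin 7) :
    totCohDim 3 (dbarOp 3 iwasawaDC) ((k : ℕ) : ℤ) = ![1, 5, 11, 14, 11, 5, 1] k := by
  rw [totCohDim_dbarOp_iwasawaDC]
  fin_cases k <;> decide

lemma sum_hodgeDim_iwasawaDC (k : Fin 7) :
    ∑ q ∈ Finset.range (3 + 1), hodgeDim 3 iwasawaDC ((3 : ℕ) - ((k : ℕ) : ℤ) + q) q =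
      ![1, 5, 11, 14, 11, 5, 1] k := by
  simp only [Finset.sum_range_succ, Finset.sum_range_zero, hodgeDim_iwasawaDC]
  fin_cases k <;> decide

/-- **Poisson structures and Koszul–Brylinski homology of the Iwasawa manifold**
(Section 6.2): for `π = c₁X₁∧X₂ + c₂X₁∧X₃ + c₃X₂∧X₃` a left-invariant bivector field
on the Iwasawa manifold `𝕀₃`, one has `[π, π]_S = 0` if and only if `c₂ = 0`; and
for such `π` the Koszul–Brylinski operator `∂_π` vanishes on left-invariant forms,
the Dolbeault–Koszul–Brylinski spectral sequence of `(𝕀₃, π)` degenerates at the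
`E₁`-page, and the holomorphic Koszul–Brylinski homology `H_k(𝕀₃, π)` (computed by
the total cohomology of the invariant double complex) has dimensions
`1, 5, 11, 14, 11, 5, 1` for `k = 0, …, 6`. -/
theorem iwasawa_poisson_kb (c₁ c₂ c₃ : ℂ) :
    ((∀ x y z : Fin 3,
        schouten 3 heisBracket (heisBiv c₁ c₂ c₃) (heisBiv c₁ c₂ c₃) x y z = 0) ↔
      c₂ = 0) ∧
    (c₂ = 0 →
      kbOp 3 iwasawaDC (heisBiv c₁ c₂ c₃) = 0 ∧
      e1Degenerates 3 iwasawaDC (heisBiv c₁ c₂ c₃) ∧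
      ∀ k : Fin 7,
        totCohDim 3 (kbOp 3 iwasawaDC (heisBiv c₁ c₂ c₃) + dbarOp 3 iwasawaDC)
          ((k : ℕ) : ℤ) = ![1, 5, 11, 14, 11, 5, 1] k) := by
  refine ⟨⟨fun h => ?_, ?_⟩, ?_⟩
  · simpa [schouten_heisBiv_self, tri_delta_zero_one_two] using h 0 1 2
  · rintro rfl x y z
    simp [schouten_heisBiv_self]
  · rintro rfl
    have hkb := kbOp_heisBiv_eq_zero c₁ c₃
    refine ⟨hkb, fun k h0 h6 => ?_, fun k => ?_⟩
    · lift k to ℕ using h0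
      have hk : k < 7 := by omega
      rw [hkb, zero_add]
      exact (totCohDim_dbarOp_iwasawaDC_eq ⟨k, hk⟩).trans (sum_hodgeDim_iwasawaDC ⟨k, hk⟩).symm
    · rw [hkb, zero_add]
      exact totCohDim_dbarOp_iwasawaDC_eq k

end InvForms
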